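/- arXiv:2112.08499 — 4 statements merged into one kernel-verified Lean document; each statement's English description precedes it below -/
import Mathlib

section
/- Correctness of the gate-by-gate sampling algorithm: Let U = U_m ⋯ U_2 U_1 be an n-qubit quantum circuit where each gate U_t is a unitary acting trivially outside its support supp(U_t) ⊆ {1,…,n}, and set A_t := {1,…,n} \setminus supp(U_t). Define the output distributions P_t(x) = |⟨x|U_t ⋯ U_1|0^n⟩|² for t = 0,1,…,m (so P_0 = δ_{0^n}). For each t, let M_t be any stochastic matrix on {0,1}^n (rows indexed by the current string x, columns by the new string y) satisfying M_t(y|x) = [y_{A_t} = x_{A_t}] · P_t(y)/P_t(x_{A_t}) whenever P_t(x_{A_t}) > 0, where P_t(x_{A_t}) := Σ_{w : w_{A_t} = x_{A_t}} P_t(w). Then the distribution obtained by applying M_1, M_2, …, M_m in sequence to the point distribution δ_{0^n} equals P_m, i.e., M_m ⋯ M_1 δ_{0^n} = P_m. -/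
/-!
A gate supported on `supp t` acts, on each fibre `{w | w_{A_t} = z}`, as the same unitary
on the `supp t`-bits, so it preserves every marginal on `A_t`: `P_{t+1}(z) = P_t(z)`.
Hence if `x ~ P_t`, then `x_{A_t}` is distributed according to the marginal of `P_{t+1}`,
and resampling the remaining bits from the conditional of `P_{t+1}` given `x_{A_t}` produces
a sample of `P_{t+1}`. Induction on `t` gives the theorem.
-/

/-- Restriction of a bit string `x : Fin n → Bool` to the positions in `A`. -/
def restrictTo {n : ℕ} (A : Finset (Fin n)) (x : Fin n → Bool) :
    {i : Fin n // i ∈ A} → Bool :=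
  fun i => x i.val

open Finset Matrix

def marginal {α β R : Type*} [Fintype α] [DecidableEq β] [AddCommMonoid R]
    (proj : α → β) (P : α → R) (z : β) : R :=
  ∑ w, if proj w = z then P w else 0

section Marginal

variable {α β : Type*} [Fintype α] [DecidableEq β] {proj : α → β}

lemma marginal_eq_sum_symm {σ R : Type*} [Fintype σ] [Fintype β] [AddCommMonoid R]
    (e : α ≃ σ × β) (P : α → R) (z : β) :
    marginal (fun x => (e x).2) P z = ∑ s, P (e.symm (s, z)) := by
  simp [marginal, ← e.symm.sum_comp, Fintype.sum_prod_type]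

lemma marginal_nonneg {P : α → ℝ} (hP : 0 ≤ P) (z : β) : 0 ≤ marginal proj P z :=
  sum_nonneg fun w _ => ite_nonneg (hP w) le_rfl

lemma apply_eq_zero_of_marginal_eq_zero {P : α → ℝ} (hP : 0 ≤ P) {x : α}
    (h : marginal proj P (proj x) = 0) : P x = 0 := by
  simpa using (sum_eq_zero_iff_of_nonneg fun w _ => ite_nonneg (hP w) le_rfl).1 h x (mem_univ x)

/-- Where the marginal of `P` vanishes, so does that of `P'`, hence `P'` itself: the
unconstrained values of `M` there are multiplied by zero. -/
theorem sum_mul_eq_of_marginal_eq {P P' : α → ℝ} (hP : 0 ≤ P) (hP' : 0 ≤ P')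
    (hmarg : marginal proj P = marginal proj P') {M : α → α → ℝ}
    (hM : ∀ x y, 0 < marginal proj P (proj x) →
      M y x = if proj y = proj x then P y / marginal proj P (proj x) else 0)
    (y : α) :
    ∑ x, M y x * P' x = P y := by
  have hterm : ∀ x, M y x * P' x =
      if proj x = proj y then P y / marginal proj P (proj y) * P' x else 0 := by
    intro x
    rcases (marginal_nonneg hP (proj x)).lt_or_eq with hpos | hzero
    · rw [hM x y hpos]
      by_cases h : proj x = proj y
      · simp [h]
      · simp [h, Ne.symm h]
    · simp [apply_eq_zero_of_marginal_eq_zero hP' (hmarg ▸ hzero.symm)]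
  calc ∑ x, M y x * P' x = P y / marginal proj P (proj y) * marginal proj P' (proj y) := by
        simp only [hterm, marginal, mul_sum, mul_ite, mul_zero]
    _ = P y := by
        rw [← hmarg]
        exact div_mul_cancel_of_imp (apply_eq_zero_of_marginal_eq_zero hP)

end Marginal

lemma sum_norm_sq_mulVec_of_mem_unitaryGroup {𝕜 ι : Type*} [RCLike 𝕜] [Fintype ι]
    [DecidableEq ι] {V : Matrix ι ι 𝕜} (hV : V ∈ unitaryGroup ι 𝕜) (φ : ι → 𝕜) :
    ∑ s, ‖(V *ᵥ φ) s‖ ^ 2 = ∑ s, ‖φ s‖ ^ 2 := by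
  have h_dot : ∀ v : ι → 𝕜, ((∑ s, ‖v s‖ ^ 2 : ℝ) : 𝕜) = star v ⬝ᵥ v := fun v => by
    simp [dotProduct, RCLike.conj_mul]
  have h_unitary : star (V *ᵥ φ) ⬝ᵥ (V *ᵥ φ) = star φ ⬝ᵥ φ := by
    rw [star_mulVec, dotProduct_mulVec, vecMul_vecMul, ← star_eq_conjTranspose,
      mem_unitaryGroup_iff'.1 hV, vecMul_one]
  exact_mod_cast (h_dot _).trans (h_unitary.trans (h_dot φ).symm)

theorem marginal_norm_sq_mulVec_eq {𝕜 α σ β : Type*} [RCLike 𝕜] [Fintype α] [Fintype σ]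
    [DecidableEq σ] [Fintype β] [DecidableEq β] (e : α ≃ σ × β) {V : Matrix σ σ 𝕜}
    (hV : V ∈ unitaryGroup σ 𝕜) {U : Matrix α α 𝕜}
    (hUV : ∀ x y, U x y = if (e x).2 = (e y).2 then V (e x).1 (e y).1 else 0) (ψ : α → 𝕜) :
    marginal (fun x => (e x).2) (fun x => ‖(U *ᵥ ψ) x‖ ^ 2) =
      marginal (fun x => (e x).2) (fun x => ‖ψ x‖ ^ 2) := by
  funext z
  have h_fibre : ∀ s, (U *ᵥ ψ) (e.symm (s, z)) = (V *ᵥ fun s' => ψ (e.symm (s', z))) s := by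
    intro s
    simp [mulVec, dotProduct, hUV, ← e.symm.sum_comp, Fintype.sum_prod_type, ite_mul]
  simp only [marginal_eq_sum_symm, h_fibre]
  exact sum_norm_sq_mulVec_of_mem_unitaryGroup hV _

def restrictToEquiv {n : ℕ} (A : Finset (Fin n)) :
    (Fin n → Bool) ≃ ({i : Fin n // i ∈ A} → Bool) × ({i : Fin n // i ∈ Aᶜ} → Bool) where
  toFun x := (restrictTo A x, restrictTo Aᶜ x)
  invFun p i := if h : i ∈ A then p.1 ⟨i, h⟩ else p.2 ⟨i, mem_compl.2 h⟩
  left_inv x := by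
    funext i
    by_cases h : i ∈ A <;> simp [restrictTo, h]
  right_inv p := by
    ext i
    · simp [restrictTo, i.2]
    · simp [restrictTo, mem_compl.1 i.2]

theorem stmt_2_general (n m : ℕ)
    (U : Fin m → Matrix (Fin n → Bool) (Fin n → Bool) ℂ)
    (supp : Fin m → Finset (Fin n))
    (hsupp : ∀ t : Fin m,
      ∃ V ∈ Matrix.unitaryGroup ({i : Fin n // i ∈ supp t} → Bool) ℂ,
        ∀ x y : Fin n → Bool,
          U t x y = if restrictTo (supp t)ᶜ x = restrictTo (supp t)ᶜ y
            then V (restrictTo (supp t) x) (restrictTo (supp t) y) else 0)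
    (ψ : ℕ → (Fin n → Bool) → ℂ)
    (hψ0 : ψ 0 = fun x => if x = (fun _ => false) then 1 else 0)
    (hψ : ∀ t : Fin m, ψ (t + 1) = (U t).mulVec (ψ t))
    (M : Fin m → (Fin n → Bool) → (Fin n → Bool) → ℝ)
    (hM : ∀ t : Fin m, ∀ x y : Fin n → Bool,
      0 < (∑ w : Fin n → Bool,
          if restrictTo (supp t)ᶜ w = restrictTo (supp t)ᶜ x
            then ‖ψ (t + 1) w‖ ^ 2 else 0) →
      M t y x = if restrictTo (supp t)ᶜ y = restrictTo (supp t)ᶜ x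
        then ‖ψ (t + 1) y‖ ^ 2 /
          (∑ w : Fin n → Bool,
            if restrictTo (supp t)ᶜ w = restrictTo (supp t)ᶜ x
              then ‖ψ (t + 1) w‖ ^ 2 else 0)
        else 0)
    (Q : ℕ → (Fin n → Bool) → ℝ)
    (hQ0 : Q 0 = fun x => if x = (fun _ => false) then 1 else 0)
    (hQ : ∀ t : Fin m, Q (t + 1) = fun y => ∑ x, M t y x * Q t x) :
    ∀ x : Fin n → Bool, Q m x = ‖ψ m x‖ ^ 2 := by
  suffices h : ∀ t ≤ m, ∀ x, Q t x = ‖ψ t x‖ ^ 2 from h m le_rfl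
  intro t ht
  induction t with
  | zero =>
    intro x
    rw [hQ0, hψ0]
    by_cases h : x = fun _ => false <;> simp [h]
  | succ t ih =>
    let T : Fin m := ⟨t, ht⟩
    obtain ⟨V, hV, hUV⟩ := hsupp T
    have hmarg : marginal (restrictTo (supp T)ᶜ) (fun x => ‖ψ (T + 1) x‖ ^ 2) =
        marginal (restrictTo (supp T)ᶜ) (fun x => ‖ψ T x‖ ^ 2) := by
      rw [hψ T]
      exact marginal_norm_sq_mulVec_eq (restrictToEquiv (supp T)) hV hUV (ψ T)
    intro y
    calc Q (t + 1) y = ∑ x, M T y x * Q t x := congrFun (hQ T) y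
      _ = ∑ x, M T y x * ‖ψ t x‖ ^ 2 := by simp only [ih (Nat.le_of_succ_le ht)]
      _ = ‖ψ (t + 1) y‖ ^ 2 :=
        sum_mul_eq_of_marginal_eq (fun _ => sq_nonneg _) (fun _ => sq_nonneg _) hmarg (hM T) y

/-- Correctness of the gate-by-gate sampling algorithm.
Let `U = U_{m-1} ⋯ U_1 U_0` be an `n`-qubit circuit in which each gate `U t`
acts trivially outside its support `supp t` (it factors as a unitary on
`supp t` tensored with the identity on the complement `A_t = (supp t)ᶜ`).
Let `ψ t` be the state after the first `t` gates and `P_t(x) = ‖ψ t x‖²`.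
If `M t` is any stochastic matrix (columns indexed by the current string `x`)
that agrees with the conditional distribution
`[y_{A_t} = x_{A_t}] · P_{t+1}(y)/P_{t+1}(x_{A_t})` whenever the marginal
`P_{t+1}(x_{A_t})` is positive, then applying `M 0, …, M (m-1)` in sequence
to the point distribution on `0^n` yields exactly `P_m`. -/
theorem stmt_2 (n m : ℕ)
    (U : Fin m → Matrix (Fin n → Bool) (Fin n → Bool) ℂ)
    (supp : Fin m → Finset (Fin n))
    (hU : ∀ t, U t ∈ Matrix.unitaryGroup (Fin n → Bool) ℂ)
    (hsupp : ∀ t : Fin m,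
      ∃ V ∈ Matrix.unitaryGroup ({i : Fin n // i ∈ supp t} → Bool) ℂ,
        ∀ x y : Fin n → Bool,
          U t x y = if restrictTo (supp t)ᶜ x = restrictTo (supp t)ᶜ y
            then V (restrictTo (supp t) x) (restrictTo (supp t) y) else 0)
    (ψ : ℕ → (Fin n → Bool) → ℂ)
    (hψ0 : ψ 0 = fun x => if x = (fun _ => false) then 1 else 0)
    (hψ : ∀ t : Fin m, ψ (t + 1) = (U t).mulVec (ψ t))
    (M : Fin m → (Fin n → Bool) → (Fin n → Bool) → ℝ)
    (hMnn : ∀ t x y, 0 ≤ M t y x)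
    (hMsum : ∀ t x, ∑ y, M t y x = 1)
    (hM : ∀ t : Fin m, ∀ x y : Fin n → Bool,
      0 < (∑ w : Fin n → Bool,
          if restrictTo (supp t)ᶜ w = restrictTo (supp t)ᶜ x
            then ‖ψ (t + 1) w‖ ^ 2 else 0) →
      M t y x = if restrictTo (supp t)ᶜ y = restrictTo (supp t)ᶜ x
        then ‖ψ (t + 1) y‖ ^ 2 /
          (∑ w : Fin n → Bool,
            if restrictTo (supp t)ᶜ w = restrictTo (supp t)ᶜ x
              then ‖ψ (t + 1) w‖ ^ 2 else 0)
        else 0)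
    (Q : ℕ → (Fin n → Bool) → ℝ)
    (hQ0 : Q 0 = fun x => if x = (fun _ => false) then 1 else 0)
    (hQ : ∀ t : Fin m, Q (t + 1) = fun y => ∑ x, M t y x * Q t x) :
    ∀ x : Fin n → Bool, Q m x = ‖ψ m x‖ ^ 2 :=
  stmt_2_general n m U supp hsupp ψ hψ0 hψ M hM Q hQ0 hQ
end

section
/- Magic ratio property, part (i): Let X be a finite index set. For a ∈ {1,…,m} and j in a finite index set J_a, let φ_{a,j} ∈ ℂ^X be vectors such that for each a and all j ≠ j', the supports Supp(φ_{a,j}) = {x ∈ X : ⟨x|φ_{a,j}⟩ ≠ 0} and Supp(φ_{a,j'}) are disjoint. Let P_a = Σ_{j ∈ J_a} |φ_{a,j}⟩⟨φ_{a,j}| and H = −Σ_{a=1}^m P_a. Let ψ ∈ ℂ^X satisfy P_a ψ = ψ for every a. Then for all x, y ∈ X: if ⟨x|H|y⟩ ≠ 0, then ⟨x|ψ⟩ = 0 if and only if ⟨y|ψ⟩ = 0. -/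
/-!
If `P = Σ_j |u_j⟩⟨v_j|` and the `u_j` have pairwise disjoint supports, then at a point `z` of the
support of `u_j` only the `j`-th term contributes, so `(Pψ)(z) = u_j(z) ⟨v_j, ψ⟩`. For a fixed
point `ψ = Pψ` this says that `ψ` is proportional to `u_j` on its support. A nonzero entry `H x y`
forces some `φ_{a,j}` to be nonzero at both `x` and `y`, so `ψ x` and `ψ y` are nonzero multiples
of the same scalar `⟨φ_{a,j}, ψ⟩`.
-/

namespace Matrix

variable {R X ι : Type*} [Semiring R] [Fintype X] [Fintype ι]

theorem mulVec_apply_of_disjoint_support {u v : ι → X → R}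
    (hdisj : ∀ j j' : ι, j ≠ j' → ∀ x : X, u j x ≠ 0 → u j' x = 0)
    {P : Matrix X X R} (hP : ∀ x y, P x y = ∑ j, u j x * v j y) (ψ : X → R)
    {j : ι} {z : X} (hz : u j z ≠ 0) :
    (P *ᵥ ψ) z = u j z * (v j ⬝ᵥ ψ) := by
  calc (P *ᵥ ψ) z = ∑ j', u j' z * (v j' ⬝ᵥ ψ) := by
        simp only [mulVec, dotProduct, hP, Finset.sum_mul, Finset.mul_sum, mul_assoc]
        exact Finset.sum_comm
    _ = u j z * (v j ⬝ᵥ ψ) := by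
        refine Finset.sum_eq_single j (fun j' _ hj' => ?_) (by simp)
        rw [hdisj j j' hj'.symm z hz, zero_mul]

theorem apply_eq_zero_iff_of_mulVec_eq_self [NoZeroDivisors R] {u v : ι → X → R}
    (hdisj : ∀ j j' : ι, j ≠ j' → ∀ x : X, u j x ≠ 0 → u j' x = 0)
    {P : Matrix X X R} (hP : ∀ x y, P x y = ∑ j, u j x * v j y) {ψ : X → R}
    (hψ : P *ᵥ ψ = ψ) {j : ι} {x y : X} (hx : u j x ≠ 0) (hy : u j y ≠ 0) :
    ψ x = 0 ↔ ψ y = 0 := by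
  rw [← hψ, mulVec_apply_of_disjoint_support hdisj hP ψ hx,
    mulVec_apply_of_disjoint_support hdisj hP ψ hy, mul_eq_zero_iff_left hx,
    mul_eq_zero_iff_left hy]

end Matrix

/-- Magic ratio property, part (i): let `H = −Σ_a P_a` where each
`P_a = Σ_j |φ_{a,j}⟩⟨φ_{a,j}|` is a sum of rank-one terms whose supports are
pairwise disjoint over `j`, and let `ψ` satisfy `P_a ψ = ψ` for every `a`
(frustration-freeness). Then `⟨x|H|y⟩ ≠ 0` implies that `⟨x|ψ⟩ = 0` iff
`⟨y|ψ⟩ = 0`. -/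
theorem stmt_15 {X : Type*} [Fintype X] (m : ℕ)
    (J : Fin m → Type*) [∀ a, Fintype (J a)]
    (φ : (a : Fin m) → J a → X → ℂ)
    (hdisj : ∀ a : Fin m, ∀ j j' : J a, j ≠ j' →
      ∀ x : X, φ a j x ≠ 0 → φ a j' x = 0)
    (P : Fin m → Matrix X X ℂ)
    (hP : ∀ a x y, P a x y = ∑ j, φ a j x * (starRingEnd ℂ) (φ a j y))
    (H : Matrix X X ℂ) (hH : H = -∑ a, P a)
    (ψ : X → ℂ) (hψ : ∀ a, (P a).mulVec ψ = ψ) :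
    ∀ x y : X, H x y ≠ 0 → (ψ x = 0 ↔ ψ y = 0) := by
  intro x y hxy
  have hsum : ∑ a, P a x y ≠ 0 := by
    simpa only [hH, Matrix.neg_apply, Matrix.sum_apply, neg_ne_zero] using hxy
  obtain ⟨a, -, ha⟩ := Finset.exists_ne_zero_of_sum_ne_zero hsum
  rw [hP] at ha
  obtain ⟨j, -, hj⟩ := Finset.exists_ne_zero_of_sum_ne_zero ha
  have hy : φ a j y ≠ 0 := by simpa using right_ne_zero_of_mul hj
  exact Matrix.apply_eq_zero_iff_of_mulVec_eq_self (hdisj a) (hP a) (hψ a)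
    (left_ne_zero_of_mul hj) hy
end

section
/- Magic ratio property, part (ii): Let X be a finite index set. For a ∈ {1,…,m} and j in a finite index set J_a, let φ_{a,j} ∈ ℂ^X be vectors such that for each a and all j ≠ j', the supports Supp(φ_{a,j}) = {x ∈ X : ⟨x|φ_{a,j}⟩ ≠ 0} and Supp(φ_{a,j'}) are disjoint. Let P_a = Σ_{j ∈ J_a} |φ_{a,j}⟩⟨φ_{a,j}| and H = −Σ_{a=1}^m P_a, and let ψ ∈ ℂ^X satisfy P_a ψ = ψ for every a. Then for all x, y ∈ X with ⟨x|H|y⟩ ≠ 0 and ⟨x|ψ⟩ ≠ 0, there exist a ∈ {1,…,m} and j ∈ J_a such that ⟨x|φ_{a,j}⟩ ≠ 0, ⟨y|φ_{a,j}⟩ ≠ 0, and ⟨y|ψ⟩ / ⟨x|ψ⟩ = ⟨y|φ_{a,j}⟩ / ⟨x|φ_{a,j}⟩; moreover for this a the index j is the unique element of J_a with ⟨x|φ_{a,j}⟩ ≠ 0 and ⟨y|φ_{a,j}⟩ ≠ 0. -/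
/-!
On the support of a rank-one term `φ_{a,j}`, disjointness of supports kills every other term of
`P_a`, so the fixed-point equation `P_a ψ = ψ` reads `ψ = ⟨φ_{a,j}|ψ⟩ φ_{a,j}` there; hence `ψ` and
`φ_{a,j}` have the same ratios on that support. A nonzero entry `⟨x|H|y⟩` provides a term `j` of
some `P_a` whose support contains both `x` and `y`.
-/

open Matrix

section RankOneSum

variable {R X J : Type*} [CommSemiring R] [Fintype J]
  {φ χ : J → X → R} {P : Matrix X X R}

theorem mulVec_apply_eq_sum_of_rankOne [Fintype X] (hP : ∀ x y, P x y = ∑ j, φ j x * χ j y)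
    (ψ : X → R) (z : X) : (P *ᵥ ψ) z = ∑ j, φ j z * (χ j ⬝ᵥ ψ) := by
  simp only [mulVec, dotProduct, hP, Finset.sum_mul, Finset.mul_sum, mul_assoc]
  exact Finset.sum_comm

theorem mulVec_apply_eq_of_disjoint_support [Fintype X]
    (hP : ∀ x y, P x y = ∑ j, φ j x * χ j y)
    (hdisj : ∀ j j', j ≠ j' → ∀ x, φ j x ≠ 0 → φ j' x = 0)
    (ψ : X → R) {j : J} {z : X} (hz : φ j z ≠ 0) :
    (P *ᵥ ψ) z = φ j z * (χ j ⬝ᵥ ψ) := by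
  rw [mulVec_apply_eq_sum_of_rankOne hP]
  refine Finset.sum_eq_single j (fun j' _ hj' => ?_) (by simp)
  rw [hdisj j j' hj'.symm z hz, zero_mul]

theorem exists_apply_ne_zero_of_rankOne_ne_zero (hP : ∀ x y, P x y = ∑ j, φ j x * χ j y)
    {x y : X} (hxy : P x y ≠ 0) : ∃ j, φ j x ≠ 0 ∧ χ j y ≠ 0 := by
  rw [hP] at hxy
  obtain ⟨j, -, hj⟩ := Finset.exists_ne_zero_of_sum_ne_zero hxy
  exact ⟨j, left_ne_zero_of_mul hj, right_ne_zero_of_mul hj⟩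

end RankOneSum

/-- Magic ratio property, part (ii): let `H = −Σ_a P_a` where each
`P_a = Σ_j |φ_{a,j}⟩⟨φ_{a,j}|` is a sum of rank-one terms whose supports are
pairwise disjoint over `j`, and let `ψ` satisfy `P_a ψ = ψ` for every `a`.
If `⟨x|H|y⟩ ≠ 0` and `⟨x|ψ⟩ ≠ 0`, then there are `a` and `j ∈ J_a` with
`⟨x|φ_{a,j}⟩ ≠ 0`, `⟨y|φ_{a,j}⟩ ≠ 0`, and
`⟨y|ψ⟩/⟨x|ψ⟩ = ⟨y|φ_{a,j}⟩/⟨x|φ_{a,j}⟩`; moreover for this `a` the index `j`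
is the unique one supporting both `x` and `y`. -/
theorem stmt_16 {X : Type*} [Fintype X] (m : ℕ)
    (J : Fin m → Type*) [∀ a, Fintype (J a)]
    (φ : (a : Fin m) → J a → X → ℂ)
    (hdisj : ∀ a : Fin m, ∀ j j' : J a, j ≠ j' →
      ∀ x : X, φ a j x ≠ 0 → φ a j' x = 0)
    (P : Fin m → Matrix X X ℂ)
    (hP : ∀ a x y, P a x y = ∑ j, φ a j x * (starRingEnd ℂ) (φ a j y))
    (H : Matrix X X ℂ) (hH : H = -∑ a, P a)
    (ψ : X → ℂ) (hψ : ∀ a, (P a).mulVec ψ = ψ) :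
    ∀ x y : X, H x y ≠ 0 → ψ x ≠ 0 →
      ∃ a : Fin m, ∃ j : J a,
        φ a j x ≠ 0 ∧ φ a j y ≠ 0 ∧
        ψ y / ψ x = φ a j y / φ a j x ∧
        ∀ j' : J a, φ a j' x ≠ 0 → φ a j' y ≠ 0 → j' = j := by
  intro x y hHxy hψx
  obtain ⟨a, -, ha⟩ : ∃ a ∈ Finset.univ, P a x y ≠ 0 := by
    refine Finset.exists_ne_zero_of_sum_ne_zero ?_
    simpa [hH, Matrix.sum_apply] using hHxy
  obtain ⟨j, hjx, hjy⟩ := exists_apply_ne_zero_of_rankOne_ne_zero (hP a) ha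
  rw [map_ne_zero] at hjy
  obtain ⟨c, hψ_on_support⟩ : ∃ c : ℂ, ∀ {z}, φ a j z ≠ 0 → ψ z = φ a j z * c :=
    ⟨_, fun hz => by rw [← mulVec_apply_eq_of_disjoint_support (hP a) (hdisj a) ψ hz, hψ a]⟩
  rw [hψ_on_support hjx] at hψx ⊢
  refine ⟨a, j, hjx, hjy, ?_, fun j' hj'x _ => ?_⟩
  · rw [hψ_on_support hjy, mul_div_mul_right _ _ (right_ne_zero_of_mul hψx)]
  · by_contra hj'
    exact hj'x (hdisj a j j' (Ne.symm hj') x hjx)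
end

section
/- Sensitivity bound for magic ratio Hamiltonians: Let X be a finite index set. For a ∈ {1,…,m} and j in a finite index set J_a, let φ_{a,j} ∈ ℂ^X be unit vectors such that for each a and all j ≠ j', the supports Supp(φ_{a,j}) = {x ∈ X : ⟨x|φ_{a,j}⟩ ≠ 0} and Supp(φ_{a,j'}) are disjoint. Let P_a = Σ_{j ∈ J_a} |φ_{a,j}⟩⟨φ_{a,j}| and H = −Σ_{a=1}^m P_a, and let ψ ∈ ℂ^X satisfy P_a ψ = ψ for every a. Then for all x ≠ y in X with ⟨y|ψ⟩ ≠ 0, |⟨y|H|x⟩ ⟨x|ψ⟩| ≤ m · |⟨y|ψ⟩|; i.e., the sensitivity parameter s = max_{x≠y, ⟨y|ψ⟩≠0} |⟨y|H|x⟩⟨x|ψ⟩| / |⟨y|ψ⟩| satisfies s ≤ m. -/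
/-!
Fix one `P = Σ_j |φ_j⟩⟨φ_j|` with disjointly supported unit vectors `φ_j`, and let `y` lie in
the support of `φ_{j₀}` (otherwise row `y` of `P` vanishes). Then `⟨y|P|x⟩ = φ_{j₀}(y) conj φ_{j₀}(x)`,
and `Pψ = ψ` gives `ψ = φ_{j₀} ⟨φ_{j₀}|ψ⟩` on the support of `φ_{j₀}`. Hence
`|⟨y|P|x⟩ ψ(x)| = |φ_{j₀}(x)|² |ψ(y)| ≤ |ψ(y)|`, and the triangle inequality over the `m` terms of
`H` gives the bound `m |ψ(y)|`.
-/

open Finset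

namespace DisjointRankOneSum

variable {X J : Type*} [Fintype J] {φ : J → X → ℂ}

lemma sum_mul_eq_single (hdisj : ∀ j j' : J, j ≠ j' → ∀ x : X, φ j x ≠ 0 → φ j' x = 0)
    {j₀ : J} {w : X} (hw : φ j₀ w ≠ 0) (f : J → ℂ) :
    ∑ j, φ j w * f j = φ j₀ w * f j₀ :=
  Fintype.sum_eq_single j₀ fun j hj => by rw [hdisj j₀ j (Ne.symm hj) w hw, zero_mul]

lemma eq_sum_of_mulVec_eq [Fintype X] {P : Matrix X X ℂ}
    (hP : ∀ x y, P x y = ∑ j, φ j x * starRingEnd ℂ (φ j y))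
    {ψ : X → ℂ} (hψ : P.mulVec ψ = ψ) (w : X) :
    ψ w = ∑ j, φ j w * (star (φ j) ⬝ᵥ ψ) := by
  conv_lhs => rw [← hψ]
  simp only [Matrix.mulVec, dotProduct, hP, Pi.star_apply, RCLike.star_def, sum_mul, mul_sum,
    mul_assoc]
  exact sum_comm

lemma norm_apply_mul_le [Fintype X]
    (hdisj : ∀ j j' : J, j ≠ j' → ∀ x : X, φ j x ≠ 0 → φ j' x = 0)
    (hφ : ∀ j x, ‖φ j x‖ ≤ 1) {P : Matrix X X ℂ}
    (hP : ∀ x y, P x y = ∑ j, φ j x * starRingEnd ℂ (φ j y))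
    {ψ : X → ℂ} (hψ : P.mulVec ψ = ψ) (x y : X) :
    ‖P y x * ψ x‖ ≤ ‖ψ y‖ := by
  by_cases hy : ∃ j₀, φ j₀ y ≠ 0
  · obtain ⟨j₀, hj₀y⟩ := hy
    have hPyx : P y x = φ j₀ y * starRingEnd ℂ (φ j₀ x) := by
      rw [hP, sum_mul_eq_single hdisj hj₀y]
    have hψy : ψ y = φ j₀ y * (star (φ j₀) ⬝ᵥ ψ) := by
      rw [eq_sum_of_mulVec_eq hP hψ, sum_mul_eq_single hdisj hj₀y]
    by_cases hj₀x : φ j₀ x = 0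
    · simp [hPyx, hj₀x]
    have hψx : ψ x = φ j₀ x * (star (φ j₀) ⬝ᵥ ψ) := by
      rw [eq_sum_of_mulVec_eq hP hψ, sum_mul_eq_single hdisj hj₀x]
    calc ‖P y x * ψ x‖ = ‖φ j₀ x‖ * ‖φ j₀ x‖ * ‖ψ y‖ := by
          rw [hPyx, hψx, hψy]
          simp only [norm_mul, RCLike.norm_conj]
          ring
      _ ≤ 1 * 1 * ‖ψ y‖ := by gcongr <;> exact hφ j₀ x
      _ = ‖ψ y‖ := by ring
  · push Not at hy
    simp [hP, hy]

end DisjointRankOneSum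

lemma norm_le_one_of_sum_sq_eq_one {X : Type*} [Fintype X] {v : X → ℂ}
    (hv : ∑ x, ‖v x‖ ^ 2 = 1) (x : X) : ‖v x‖ ≤ 1 := by
  have hsq : ‖v x‖ ^ 2 ≤ 1 :=
    hv ▸ single_le_sum (f := fun z => ‖v z‖ ^ 2) (fun _ _ => sq_nonneg _) (mem_univ x)
  exact (sq_le_one_iff₀ (norm_nonneg _)).mp hsq

/-- Sensitivity bound for magic ratio Hamiltonians: let `H = −Σ_{a=1}^m P_a`,
where each `P_a = Σ_j |φ_{a,j}⟩⟨φ_{a,j}|` is a sum of rank-one projectors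
(the `φ_{a,j}` are unit vectors) whose supports are pairwise disjoint over
`j`, and let `ψ` satisfy `P_a ψ = ψ` for every `a`. Then for all `x ≠ y` with
`⟨y|ψ⟩ ≠ 0`, `|⟨y|H|x⟩ ⟨x|ψ⟩| ≤ m · |⟨y|ψ⟩|`. -/
theorem stmt_17 {X : Type*} [Fintype X] (m : ℕ)
    (J : Fin m → Type*) [∀ a, Fintype (J a)]
    (φ : (a : Fin m) → J a → X → ℂ)
    (hunit : ∀ a : Fin m, ∀ j : J a, ∑ x, ‖φ a j x‖ ^ 2 = 1)
    (hdisj : ∀ a : Fin m, ∀ j j' : J a, j ≠ j' →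
      ∀ x : X, φ a j x ≠ 0 → φ a j' x = 0)
    (P : Fin m → Matrix X X ℂ)
    (hP : ∀ a x y, P a x y = ∑ j, φ a j x * (starRingEnd ℂ) (φ a j y))
    (H : Matrix X X ℂ) (hH : H = -∑ a, P a)
    (ψ : X → ℂ) (hψ : ∀ a, (P a).mulVec ψ = ψ) :
    ∀ x y : X, x ≠ y → ψ y ≠ 0 → ‖H y x * ψ x‖ ≤ (m : ℝ) * ‖ψ y‖ := by
  intro x y _ _
  have hterm (a : Fin m) : ‖P a y x * ψ x‖ ≤ ‖ψ y‖ :=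
    DisjointRankOneSum.norm_apply_mul_le (hdisj a)
      (fun j => norm_le_one_of_sum_sq_eq_one (hunit a j)) (hP a) (hψ a) x y
  calc ‖H y x * ψ x‖ = ‖∑ a, P a y x * ψ x‖ := by
        rw [hH, Matrix.neg_apply, Matrix.sum_apply, neg_mul, norm_neg, sum_mul]
    _ ≤ ∑ a, ‖P a y x * ψ x‖ := norm_sum_le _ _
    _ ≤ ∑ _a : Fin m, ‖ψ y‖ := sum_le_sum fun a _ => hterm a
    _ = m * ‖ψ y‖ := by simp
end
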